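/- arXiv:2302.09843 — 5 statements merged into one kernel-verified Lean document; each statement's English description precedes it below -/
import Mathlib

section
/- Let v : ℝ, let W : ℕ → ℝ be bounded (∃ C, ∀ n, |W n| ≤ C), and let r : ℕ → ℝ be nondecreasing with 0 ≤ r n ≤ 1 for all n. If for every m ∈ ℕ we have v ≤ r m + W (m+1) − W m, then v ≤ ⨆ n, r n. -/
theorem lower_bound_telescope (v : ℝ) (W r : ℕ → ℝ)
    (hW : ∃ C, ∀ n, |W n| ≤ C) (hmono : Monotone r)
    (h0 : ∀ n, 0 ≤ r n) (h1 : ∀ n, r n ≤ 1)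
    (h : ∀ m : ℕ, v ≤ r m + W (m + 1) - W m) :
    v ≤ ⨆ n, r n := by
  obtain ⟨C, hC⟩ := hW
  set L := ⨆ n, r n with hL
  have hbdd : BddAbove (Set.range r) := ⟨1, by rintro x ⟨n, rfl⟩; exact h1 n⟩
  have hrL : ∀ n, r n ≤ L := fun n => le_ciSup hbdd n
  by_contra hlt
  push_neg at hlt
  set ε := v - L with hε
  have hεpos : 0 < ε := sub_pos.mpr hlt
  have hstep : ∀ m, W m + ε ≤ W (m + 1) := by
    intro m
    have := h m
    have h2 : v - r m ≤ W (m + 1) - W m := by linarith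
    have h3 : ε ≤ v - r m := by have := hrL m; simp [hε]; linarith
    linarith
  have hlin : ∀ M : ℕ, W 0 + M * ε ≤ W M := by
    intro M
    induction M with
    | zero => simp
    | succ n ih =>
      have := hstep n
      push_cast
      linarith
  obtain ⟨M, hM⟩ := exists_nat_gt ((2 * C) / ε)
  have h1' := hlin M
  have hC0 := hC 0
  have hCM := hC M
  have hW0 : -C ≤ W 0 := (abs_le.mp hC0).1
  have hWM : W M ≤ C := (abs_le.mp hCM).2
  have : (M : ℝ) * ε ≤ 2 * C := by linarith
  have : (2 * C) / ε < M := hM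
  have := (div_lt_iff₀ hεpos).mp hM
  linarith
end

section
/- Let λ > 0, let V : ℕ → ℝ be bounded, and let r : ℕ → ℝ be nondecreasing with 0 ≤ r n ≤ 1 for all n. Assume for every m ∈ ℕ that V m ≥ (1/(1+λ)) · r m + (λ/(1+λ)) · V (m+1). Then for every N ∈ ℕ, r N ≤ ((1+λ)/λ)^N · V 0. -/
/-!
With `q = λ / (1 + λ)` the recursion reads `(1 - q) r m + q V (m + 1) ≤ V m`. Since `r ≥ 0`, the
sequence `q ^ m V m` is nonincreasing, so `q ^ N V N ≤ V 0`. Since `r` is nondecreasing,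
`V (N + ·) - r N` is a bounded supersolution of the same recursion with zero reward; unrolling it
`m` steps and letting `q ^ m → 0` gives `r N ≤ V N`.
-/

open Filter Set

section DiscountedSupersolution

variable {q : ℝ} {V r : ℕ → ℝ}

theorem pow_mul_le_of_forall_mul_succ_le (hq : 0 ≤ q) (h : ∀ n, q * V (n + 1) ≤ V n) (m : ℕ) :
    q ^ m * V m ≤ V 0 := by
  induction m with
  | zero => simp
  | succ m ih =>
    calc q ^ (m + 1) * V (m + 1) = q ^ m * (q * V (m + 1)) := by ring
      _ ≤ q ^ m * V m := mul_le_mul_of_nonneg_left (h m) (pow_nonneg hq m)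
      _ ≤ V 0 := ih

theorem nonneg_of_forall_mul_succ_le (hq₀ : 0 ≤ q) (hq₁ : q < 1) (hV : BddBelow (range V))
    (h : ∀ n, q * V (n + 1) ≤ V n) : 0 ≤ V 0 := by
  obtain ⟨B, hB⟩ := hV
  have hlim : Tendsto (fun m : ℕ => q ^ m * B) atTop (nhds 0) := by
    simpa using (tendsto_pow_atTop_nhds_zero_of_lt_one hq₀ hq₁).mul_const B
  refine le_of_tendsto' hlim fun m => ?_
  calc q ^ m * B ≤ q ^ m * V m :=
        mul_le_mul_of_nonneg_left (hB (mem_range_self m)) (pow_nonneg hq₀ m)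
    _ ≤ V 0 := pow_mul_le_of_forall_mul_succ_le hq₀ h m

theorem le_of_discounted_supersolution (hq₀ : 0 ≤ q) (hq₁ : q < 1) (hV : BddBelow (range V))
    (hr : Monotone r) (h : ∀ m, (1 - q) * r m + q * V (m + 1) ≤ V m) (N : ℕ) : r N ≤ V N := by
  have hW : BddBelow (range fun n => V (N + n) - r N) := by
    obtain ⟨B, hB⟩ := hV
    exact ⟨B - r N, by rintro _ ⟨n, rfl⟩; linarith [hB (mem_range_self (N + n))]⟩
  have hstep (n : ℕ) : q * (V (N + (n + 1)) - r N) ≤ V (N + n) - r N := by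
    rw [← add_assoc]
    have hrN : (1 - q) * r N ≤ (1 - q) * r (N + n) :=
      mul_le_mul_of_nonneg_left (hr (Nat.le_add_right N n)) (by linarith)
    linarith [h (N + n)]
  simpa using nonneg_of_forall_mul_succ_le hq₀ hq₁ hW hstep

theorem pow_mul_le_of_discounted_supersolution (hq₀ : 0 ≤ q) (hq₁ : q < 1)
    (hV : BddBelow (range V)) (hr : Monotone r) (hr₀ : ∀ n, 0 ≤ r n)
    (h : ∀ m, (1 - q) * r m + q * V (m + 1) ≤ V m) (N : ℕ) : q ^ N * r N ≤ V 0 := by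
  have hdecr (n : ℕ) : q * V (n + 1) ≤ V n := by
    linarith [h n, mul_nonneg (sub_nonneg.2 hq₁.le) (hr₀ n)]
  calc q ^ N * r N ≤ q ^ N * V N :=
        mul_le_mul_of_nonneg_left (le_of_discounted_supersolution hq₀ hq₁ hV hr h N)
          (pow_nonneg hq₀ N)
    _ ≤ V 0 := pow_mul_le_of_forall_mul_succ_le hq₀ hdecr N

end DiscountedSupersolution

theorem discounted_upper_bound_general (lam : ℝ) (hlam : 0 < lam) (V r : ℕ → ℝ)
    (hV : ∃ C, ∀ n, |V n| ≤ C) (hmono : Monotone r)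
    (h0 : ∀ n, 0 ≤ r n)
    (h : ∀ m : ℕ, V m ≥ (1 / (1 + lam)) * r m + (lam / (1 + lam)) * V (m + 1)) :
    ∀ N : ℕ, r N ≤ ((1 + lam) / lam) ^ N * V 0 := by
  intro N
  set q := lam / (1 + lam) with hq
  have hpos : 0 < 1 + lam := by linarith
  have hq₀ : 0 < q := div_pos hlam hpos
  have hq₁ : q < 1 := (div_lt_one hpos).mpr (by linarith)
  have hbdd : BddBelow (range V) := by
    obtain ⟨C, hC⟩ := hV
    exact ⟨-C, by rintro _ ⟨n, rfl⟩; linarith [neg_abs_le (V n), hC n]⟩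
  have hrec (m : ℕ) : (1 - q) * r m + q * V (m + 1) ≤ V m := by
    have : 1 - q = 1 / (1 + lam) := by rw [hq]; field_simp; ring
    rw [this]
    exact h m
  have hinv : ((1 + lam) / lam) ^ N = (q ^ N)⁻¹ := by rw [hq, ← inv_pow, inv_div]
  rw [hinv, le_inv_mul_iff₀ (pow_pos hq₀ N)]
  exact pow_mul_le_of_discounted_supersolution hq₀.le hq₁ hbdd hmono h0 hrec N

theorem discounted_upper_bound (lam : ℝ) (hlam : 0 < lam) (V r : ℕ → ℝ)
    (hV : ∃ C, ∀ n, |V n| ≤ C) (hmono : Monotone r)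
    (h0 : ∀ n, 0 ≤ r n) (h1 : ∀ n, r n ≤ 1)
    (h : ∀ m : ℕ, V m ≥ (1 / (1 + lam)) * r m + (lam / (1 + lam)) * V (m + 1)) :
    ∀ N : ℕ, r N ≤ ((1 + lam) / lam) ^ N * V 0 :=
  discounted_upper_bound_general lam hlam V r hV hmono h0 h
end

section
/- Let λ > 0, let V : ℕ → ℝ be bounded, and let r : ℕ → ℝ be nondecreasing with 0 ≤ r n ≤ 1 for all n. Assume for every m ∈ ℕ that V m ≤ (1/(1+λ)) · r m + (λ/(1+λ)) · V (m+1). Then V 0 ≤ ⨆ n, r n. -/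
open Filter Topology

section DiscountedRecursion

variable {q : ℝ}

theorem le_pow_mul_of_le_mul_succ (hq : 0 ≤ q) {W : ℕ → ℝ} (hW : ∀ m, W m ≤ q * W (m + 1))
    (m : ℕ) : W 0 ≤ q ^ m * W m := by
  induction m with
  | zero => simp
  | succ m ih =>
    calc W 0 ≤ q ^ m * W m := ih
      _ ≤ q ^ m * (q * W (m + 1)) := mul_le_mul_of_nonneg_left (hW m) (pow_nonneg hq m)
      _ = q ^ (m + 1) * W (m + 1) := by ring

theorem nonpos_of_le_mul_succ (hq0 : 0 ≤ q) (hq1 : q < 1) {W : ℕ → ℝ}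
    (hbdd : BddAbove (Set.range W)) (hW : ∀ m, W m ≤ q * W (m + 1)) : W 0 ≤ 0 := by
  obtain ⟨C, hC⟩ := hbdd
  have hlim : Tendsto (fun m => q ^ m * C) atTop (𝓝 0) := by
    simpa using (tendsto_pow_atTop_nhds_zero_of_lt_one hq0 hq1).mul_const C
  refine ge_of_tendsto' hlim fun m => (le_pow_mul_of_le_mul_succ hq0 hW m).trans ?_
  exact mul_le_mul_of_nonneg_left (hC ⟨m, rfl⟩) (pow_nonneg hq0 m)

/-- The excess `V m - S` contracts by the factor `q` at each step, so it is crushed by `q ^ m`. -/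
theorem le_of_le_discounted_succ {S : ℝ} (hq0 : 0 ≤ q) (hq1 : q < 1) {V r : ℕ → ℝ}
    (hV : BddAbove (Set.range V)) (hr : ∀ n, r n ≤ S)
    (h : ∀ m, V m ≤ (1 - q) * r m + q * V (m + 1)) : V 0 ≤ S := by
  obtain ⟨C, hC⟩ := hV
  have hexcess_bdd : BddAbove (Set.range fun n => V n - S) := by
    refine ⟨C - S, ?_⟩
    rintro _ ⟨n, rfl⟩
    exact sub_le_sub_right (hC ⟨n, rfl⟩) S
  have hexcess : ∀ m, V m - S ≤ q * (V (m + 1) - S) := fun m => by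
    have := mul_le_mul_of_nonneg_left (hr m) (sub_nonneg.mpr hq1.le)
    linarith [h m]
  exact sub_nonpos.mp (nonpos_of_le_mul_succ hq0 hq1 hexcess_bdd hexcess)

end DiscountedRecursion

theorem discounted_lower_bound_general (lam : ℝ) (hlam : 0 < lam) (V r : ℕ → ℝ)
    (hV : ∃ C, ∀ n, |V n| ≤ C)
    (h1 : ∀ n, r n ≤ 1)
    (h : ∀ m : ℕ, V m ≤ (1 / (1 + lam)) * r m + (lam / (1 + lam)) * V (m + 1)) :
    V 0 ≤ ⨆ n, r n := by
  have hpos : 0 < 1 + lam := by linarith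
  have hweights : 1 / (1 + lam) = 1 - lam / (1 + lam) := by field_simp; ring
  have hq1 : lam / (1 + lam) < 1 := (div_lt_one hpos).mpr (by linarith)
  obtain ⟨C, hC⟩ := hV
  have hVbdd : BddAbove (Set.range V) :=
    ⟨C, by rintro _ ⟨n, rfl⟩; exact (le_abs_self _).trans (hC n)⟩
  have hrS : ∀ n, r n ≤ ⨆ n, r n := le_ciSup ⟨1, by rintro _ ⟨n, rfl⟩; exact h1 n⟩
  exact le_of_le_discounted_succ (div_pos hlam hpos).le hq1 hVbdd hrS fun m => hweights ▸ h m

theorem discounted_lower_bound (lam : ℝ) (hlam : 0 < lam) (V r : ℕ → ℝ)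
    (hV : ∃ C, ∀ n, |V n| ≤ C) (hmono : Monotone r)
    (h0 : ∀ n, 0 ≤ r n) (h1 : ∀ n, r n ≤ 1)
    (h : ∀ m : ℕ, V m ≤ (1 / (1 + lam)) * r m + (lam / (1 + lam)) * V (m + 1)) :
    V 0 ≤ ⨆ n, r n :=
  discounted_lower_bound_general lam hlam V r hV h1 h
end

section
/- Let k ≥ 1 be a natural number, c ≥ 0, v ∈ ℝ, let W : ℕ → ℝ be bounded, and let r : ℕ → ℝ be nondecreasing with 0 ≤ r n ≤ 1 for all n. Assume for every j ∈ ℕ that v + (j mod k) · c ≥ r j + W (j+1) − W j. Then ⨆ n, r n ≤ v + (k−1)·c/2. -/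
theorem k_inductive_upper_bound (k : ℕ) (hk : 1 ≤ k) (c v : ℝ) (hc : 0 ≤ c)
    (W r : ℕ → ℝ) (hW : ∃ C, ∀ n, |W n| ≤ C) (hmono : Monotone r)
    (h0 : ∀ n, 0 ≤ r n) (h1 : ∀ n, r n ≤ 1)
    (h : ∀ j : ℕ, v + (j % k : ℕ) * c ≥ r j + W (j + 1) - W j) :
    (⨆ n, r n) ≤ v + ((k : ℝ) - 1) * c / 2 := by
  obtain ⟨C, hC⟩ := hW
  set B : ℝ := ((k : ℝ) - 1) * c / 2 with hB
  -- Gauss sum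
  have hgauss : (∑ i ∈ Finset.range k, (i : ℝ)) = (k : ℝ) * ((k : ℝ) - 1) / 2 := by
    have := Finset.sum_range_id_mul_two k
    have hcast : ((∑ i ∈ Finset.range k, i : ℕ) : ℝ) * 2 = (k : ℝ) * ((k : ℝ) - 1) := by
      rw [← Nat.cast_ofNat, ← Nat.cast_mul, this]
      push_cast [Nat.cast_sub hk]
      ring
    push_cast at hcast
    linarith
  have hmod : ∀ m : ℕ, (∑ j ∈ Finset.range (m * k), ((j % k : ℕ) : ℝ))
      = (m : ℝ) * ((k : ℝ) * ((k : ℝ) - 1) / 2) := by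
    intro m
    induction m with
    | zero => simp
    | succ m ih =>
      have hmk : (m + 1) * k = m * k + k := by ring
      rw [hmk, Finset.sum_range_add, ih]
      have : ∀ i ∈ Finset.range k, (((m * k + i) % k : ℕ) : ℝ) = (i : ℝ) := by
        intro i hi
        have h2 : (m * k + i) % k = i % k := by
          rw [Nat.add_comm, Nat.add_mul_mod_self_right]
        rw [h2, Nat.mod_eq_of_lt (Finset.mem_range.mp hi)]
      rw [Finset.sum_congr rfl this, hgauss]
      push_cast
      ring
  -- main summed bound
  have hsum : ∀ m : ℕ, ∑ j ∈ Finset.range (m * k), r j ≤ (m * k : ℕ) * (v + B) + 2 * C := by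
    intro m
    have hle : ∑ j ∈ Finset.range (m * k), (r j + W (j + 1) - W j)
        ≤ ∑ j ∈ Finset.range (m * k), (v + ((j % k : ℕ) : ℝ) * c) :=
      Finset.sum_le_sum (fun j _ => h j)
    have htel : ∑ j ∈ Finset.range (m * k), (W (j + 1) - W j) = W (m * k) - W 0 :=
      Finset.sum_range_sub W (m * k)
    have hsplit : ∑ j ∈ Finset.range (m * k), (r j + W (j + 1) - W j)
        = (∑ j ∈ Finset.range (m * k), r j) + (W (m * k) - W 0) := by
      rw [← htel, ← Finset.sum_add_distrib]
      congr 1; funext j; ring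
    have hrhs : ∑ j ∈ Finset.range (m * k), (v + ((j % k : ℕ) : ℝ) * c)
        = (m * k : ℕ) * v + ((m : ℝ) * ((k : ℝ) * ((k : ℝ) - 1) / 2)) * c := by
      rw [Finset.sum_add_distrib, Finset.sum_const, ← Finset.sum_mul, hmod]
      simp [nsmul_eq_mul]
    have hBe : ((m : ℝ) * ((k : ℝ) * ((k : ℝ) - 1) / 2)) * c = (m * k : ℕ) * B := by
      rw [hB]; push_cast; ring
    have hW0 : W 0 - W (m * k) ≤ 2 * C := by
      have := hC 0
      have := hC (m * k)
      have h1' := abs_le.mp (hC 0)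
      have h2' := abs_le.mp (hC (m * k))
      linarith [h1'.1, h1'.2, h2'.1, h2'.2]
    rw [hsplit, hrhs] at hle
    rw [hBe] at hle
    linarith
  have key : ∀ n : ℕ, r n ≤ v + B := by
    intro n
    have hmk_tendsto : Filter.Tendsto (fun m : ℕ => m * k) Filter.atTop Filter.atTop := by
      apply Filter.tendsto_atTop_mono (fun m => Nat.le_mul_of_pos_right m hk)
      exact Filter.tendsto_id
    have hdiv : Filter.Tendsto (fun m : ℕ => (2 * C + (n : ℝ) * r n) / ((m * k : ℕ) : ℝ))
        Filter.atTop (nhds 0) :=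
      (tendsto_const_div_atTop_nhds_zero_nat (2 * C + (n : ℝ) * r n)).comp hmk_tendsto
    have htend : Filter.Tendsto (fun m : ℕ => v + B + (2 * C + (n : ℝ) * r n) / ((m * k : ℕ) : ℝ))
        Filter.atTop (nhds (v + B)) := by
      have := (tendsto_const_nhds (x := v + B) (α := ℕ) (f := Filter.atTop)).add hdiv
      simpa using this
    refine ge_of_tendsto htend ?_
    filter_upwards [Filter.eventually_ge_atTop (n + 1)] with m hm
    have hNn : n ≤ m * k := le_trans (Nat.le_of_succ_le hm) (Nat.le_mul_of_pos_right m hk)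
    have hNpos : 0 < m * k := Nat.mul_pos (by omega) hk
    have hlow : ((m * k - n : ℕ) : ℝ) * r n ≤ ∑ j ∈ Finset.range (m * k), r j := by
      have hsub : Finset.Ico n (m * k) ⊆ Finset.range (m * k) := by
        intro x hx
        simp only [Finset.mem_Ico] at hx
        exact Finset.mem_range.mpr hx.2
      have h1' : ∑ j ∈ Finset.Ico n (m * k), r j ≤ ∑ j ∈ Finset.range (m * k), r j :=
        Finset.sum_le_sum_of_subset_of_nonneg hsub (fun i _ _ => h0 i)
      have h2' : (Finset.Ico n (m * k)).card • r n ≤ ∑ j ∈ Finset.Ico n (m * k), r j := by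
        apply Finset.card_nsmul_le_sum
        intro i hi
        exact hmono (Finset.mem_Ico.mp hi).1
      rw [Nat.card_Ico, nsmul_eq_mul] at h2'
      linarith
    have hN : ((m * k - n : ℕ) : ℝ) = ((m * k : ℕ) : ℝ) - (n : ℝ) := by
      push_cast [Nat.cast_sub hNn]; ring
    have hchain : (((m * k : ℕ) : ℝ) - (n : ℝ)) * r n ≤ ((m * k : ℕ) : ℝ) * (v + B) + 2 * C := by
      rw [← hN]; exact le_trans hlow (hsum m)
    have hNR : (0 : ℝ) < ((m * k : ℕ) : ℝ) := by exact_mod_cast hNpos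
    have step : r n * ((m * k : ℕ) : ℝ)
        ≤ (v + B + (2 * C + (n : ℝ) * r n) / ((m * k : ℕ) : ℝ)) * ((m * k : ℕ) : ℝ) := by
      have heq : (v + B + (2 * C + (n : ℝ) * r n) / ((m * k : ℕ) : ℝ)) * ((m * k : ℕ) : ℝ)
          = ((m * k : ℕ) : ℝ) * (v + B) + (2 * C + (n : ℝ) * r n) := by
        rw [add_mul, div_mul_cancel₀ _ hNR.ne']; ring
      rw [heq]; linarith
    exact le_of_mul_le_mul_right step hNR
  exact ciSup_le key
end

section
/- Let α ∈ (0,1), β ∈ [0,1), ε ∈ [0,1], and N ∈ ℕ with α^N ≤ ε. Then (ε·α^{−N}·(1−α) + α·β·α^{−N}) / (1 + α·β − α) ≤ ε·α^{−N} + (α^{−N} − 1)·α·β/(1 − α). -/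
theorem bound_comparison (α β ε : ℝ) (hα : α ∈ Set.Ioo (0:ℝ) 1)
    (hβ : β ∈ Set.Ico (0:ℝ) 1) (hε : ε ∈ Set.Icc (0:ℝ) 1)
    (N : ℕ) (hN : α ^ N ≤ ε) :
    (ε * α ^ (-(N : ℤ)) * (1 - α) + α * β * α ^ (-(N : ℤ))) / (1 + α * β - α) ≤
      ε * α ^ (-(N : ℤ)) + (α ^ (-(N : ℤ)) - 1) * α * β / (1 - α) := by
  obtain ⟨hα0, hα1⟩ := hα
  obtain ⟨hβ0, hβ1⟩ := hβ
  have hpN : 0 < α ^ N := pow_pos hα0 N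
  have hA : α ^ (-(N : ℤ)) = (α ^ N)⁻¹ := by
    rw [zpow_neg, zpow_natCast]
  set A : ℝ := α ^ (-(N : ℤ)) with hAdef
  have hApos : 0 < A := by rw [hA]; positivity
  have hεA : 1 ≤ ε * A := by
    rw [hA, ← div_eq_mul_inv]
    exact (one_le_div hpN).mpr hN
  have hA1 : 1 ≤ A := by
    calc (1:ℝ) ≤ ε * A := hεA
    _ ≤ 1 * A := by nlinarith [hε.2]
    _ = A := one_mul A
  have h1 : 0 < 1 - α := by linarith
  have h2 : 0 < 1 + α * β - α := by nlinarith
  rw [div_le_iff₀ h2]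
  have key : 0 ≤ α * β * ((1 - α) * (ε * A - 1) + (A - 1) * (α * β)) := by
    have hab : 0 ≤ α * β := by positivity
    have hx : 0 ≤ (1 - α) * (ε * A - 1) + (A - 1) * (α * β) := by
      have := mul_nonneg h1.le (by linarith : (0:ℝ) ≤ ε * A - 1)
      have := mul_nonneg (by linarith : (0:ℝ) ≤ A - 1) hab
      linarith
    exact mul_nonneg hab hx
  have expand : (ε * A + (A - 1) * α * β / (1 - α)) * (1 + α * β - α)
      - (ε * A * (1 - α) + α * β * A)
      = α * β * ((1 - α) * (ε * A - 1) + (A - 1) * (α * β)) / (1 - α) := by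
    field_simp
    ring
  nlinarith [div_nonneg key h1.le, expand]
end
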